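/- Assume l ≥ 3. Then b_1^0 − b_2^0 − b_4^0 > 0, where b_1^0 = (l·(m*)³/D)·I(0, 2(3k+2)l+2), b_2^0 = (m*/D)·((2k+1)!/P(2k+1))·I(0, 2(k+1)l+2), and b_4^0 = (l·(m*)²/D)·((k+1)!/P(2k+1))·P(k)·I(0, 2(2k+1)l+2). -/

import Mathlib

/-!
Put g(x) = Γ(x)/Γ(x + 1/2). Then I(0, 2nl + 2) = κ·g(n + 3/(2l)) with κ = 2 l^{-1/2} Γ(1/2),
and (2k+1)!/P(2k+1) = m*²·R where R is a partial Wallis product deformed by l. Hence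
b₁⁰ − b₂⁰ − b₄⁰ = (κ m*²/D)·(l m* g₁ − m* R g₂ − l G g₃), where G = (k+1)! P(k)/P(2k+1) and
gᵢ = g(cᵢ + 3/(2l)) with (c₁, c₂, c₃) = (3k+2, k+1, 2k+1).

Log-convexity of Γ gives 1/x ≤ g(x)² ≤ 1/(x − 1/2), hence g₂ ≤ ρ g₁ and g₃ ≤ √2 g₁ with
ρ² = 10/3 (ρ² = 3 when l = 3). Comparing factors, R ≤ π/2 (R ≤ 4/3 when l = 3, and R ≤ 6/5
when moreover k = 1) and m*/G ≥ (3/2)^k (kl + 1). These make the bracket a positive multiple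
of g₁.
-/

/-- The critical value m* = ∏_{j=0}^{k} (2j+1)/(2jl+1). -/
noncomputable def mStar (l k : ℕ) : ℝ :=
  ∏ j ∈ Finset.range (k + 1), (2 * (j : ℝ) + 1) / (2 * (j : ℝ) * (l : ℝ) + 1)

/-- D = 2(2k+1)l + 2. -/
noncomputable def Dd (l k : ℕ) : ℝ := 2 * (2 * (k : ℝ) + 1) * (l : ℝ) + 2

/-- P(i) = ∏_{j=0}^{i-1} (jl + 1), with P(0) = 1. -/
noncomputable def Pp (l i : ℕ) : ℝ := ∏ j ∈ Finset.range i, ((j : ℝ) * (l : ℝ) + 1)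

/-- I(a,b) = (2/l^{(a+1)/2})·Γ((a+1)/2)·Γ((b+1)/(2l))/Γ((a+1)/2 + (b+1)/(2l)),
the value of ∫_0^Ω Sn^a Cs^b dθ for even a, b. -/
noncomputable def Ii (l a b : ℕ) : ℝ :=
  2 / (l : ℝ) ^ (((a : ℝ) + 1) / 2) * Real.Gamma (((a : ℝ) + 1) / 2) *
    Real.Gamma (((b : ℝ) + 1) / (2 * (l : ℝ))) /
    Real.Gamma (((a : ℝ) + 1) / 2 + ((b : ℝ) + 1) / (2 * (l : ℝ)))

open Finset Real

noncomputable def gammaRatio (x : ℝ) : ℝ := Gamma x / Gamma (x + 1 / 2)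

lemma gammaRatio_pos {x : ℝ} (hx : 0 < x) : 0 < gammaRatio x :=
  div_pos (Gamma_pos_of_pos hx) (Gamma_pos_of_pos (by linarith))

lemma Gamma_add_half_sq_le {x : ℝ} (hx : 0 < x) : Gamma (x + 1 / 2) ^ 2 ≤ x * Gamma x ^ 2 := by
  have hconv := Gamma_mul_add_mul_le_rpow_Gamma_mul_rpow_Gamma hx (by linarith : 0 < x + 1)
    one_half_pos one_half_pos (add_halves 1)
  rw [show 1 / 2 * x + 1 / 2 * (x + 1) = x + 1 / 2 by ring, ← mul_rpow (Gamma_pos_of_pos hx).le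
    (Gamma_pos_of_pos (by linarith)).le, ← sqrt_eq_rpow, Gamma_add_one hx.ne',
    le_sqrt (Gamma_pos_of_pos (by linarith)).le (by positivity)] at hconv
  linarith

lemma one_le_gammaRatio_sq_mul {x : ℝ} (hx : 0 < x) : 1 ≤ gammaRatio x ^ 2 * x := by
  have := Gamma_pos_of_pos (by linarith : 0 < x + 1 / 2)
  rw [gammaRatio, div_pow, div_mul_eq_mul_div, one_le_div (by positivity)]
  linarith [Gamma_add_half_sq_le hx]

lemma gammaRatio_sq_mul_le {x : ℝ} (hx : 1 / 2 < x) : gammaRatio x ^ 2 * (x - 1 / 2) ≤ 1 := by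
  obtain ⟨y, hy, rfl⟩ : ∃ y, 0 < y ∧ x = y + 1 / 2 := ⟨x - 1 / 2, by linarith, by ring⟩
  have hΓ := Gamma_pos_of_pos hy
  rw [gammaRatio, add_assoc, add_halves, Gamma_add_one hy.ne', add_sub_cancel_right, div_pow,
    div_mul_eq_mul_div, div_le_one (by positivity)]
  nlinarith [Gamma_add_half_sq_le hy]

lemma gammaRatio_le_mul {x y ρ : ℝ} (hx : 0 < x) (hy : 1 / 2 < y) (hρ : 0 ≤ ρ)
    (hxy : x ≤ ρ ^ 2 * (y - 1 / 2)) : gammaRatio y ≤ ρ * gammaRatio x := by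
  have hgx := gammaRatio_pos hx
  have hgy := gammaRatio_pos (by linarith : 0 < y)
  refine (pow_le_pow_iff_left₀ hgy.le (by positivity) two_ne_zero).1 ?_
  have h1 := one_le_gammaRatio_sq_mul hx
  have h2 := gammaRatio_sq_mul_le hy
  have : gammaRatio y ^ 2 * (y - 1 / 2) ≤ (ρ * gammaRatio x) ^ 2 * (y - 1 / 2) := by
    nlinarith [mul_le_mul_of_nonneg_left hxy (sq_nonneg (gammaRatio x))]
  exact le_of_mul_le_mul_right this (by linarith)

lemma Ii_zero_two_mul_mul_add_two {l : ℕ} (hl : l ≠ 0) (n : ℕ) :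
    Ii l 0 (2 * n * l + 2) =
      2 / (l : ℝ) ^ (1 / 2 : ℝ) * Gamma (1 / 2) * gammaRatio (n + 3 / (2 * l)) := by
  have hc : (((2 * n * l + 2 : ℕ) : ℝ) + 1) / (2 * l) = n + 3 / (2 * l) := by
    push_cast; field_simp; ring
  rw [Ii, hc, gammaRatio]
  norm_num
  ring_nf

lemma Pp_succ (l i : ℕ) : Pp l (i + 1) = Pp l i * (i * l + 1) := prod_range_succ _ _

lemma Pp_pos (l i : ℕ) : 0 < Pp l i := prod_pos fun _ _ => by positivity

lemma mStar_succ (l k : ℕ) :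
    mStar l (k + 1) = mStar l k * ((2 * (k + 1) + 1) / (2 * (k + 1) * l + 1)) := by
  rw [mStar, prod_range_succ]; push_cast; rfl

lemma mStar_pos (l k : ℕ) : 0 < mStar l k := prod_pos fun _ _ => by positivity

noncomputable def deformedWallis (l k : ℕ) : ℝ :=
  ∏ i ∈ range k, ((2 * i + 2) * l + 1) / ((2 * i + 1) * l + 1) * ((2 * i + 2) / (2 * i + 3))

lemma deformedWallis_nonneg (l k : ℕ) : 0 ≤ deformedWallis l k :=
  prod_nonneg fun _ _ => by positivity

lemma factorial_div_Pp_eq (l k : ℕ) :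
    ((2 * k + 1).factorial : ℝ) / Pp l (2 * k + 1) = mStar l k ^ 2 * deformedWallis l k := by
  induction k with
  | zero => simp [Pp, mStar, deformedWallis]
  | succ k ih =>
    have hP := Pp_pos l (2 * k + 1)
    rw [show 2 * (k + 1) + 1 = 2 * k + 1 + 1 + 1 by ring, Nat.factorial_succ, Nat.factorial_succ,
      Pp_succ, Pp_succ, mStar_succ, deformedWallis, prod_range_succ, ← deformedWallis]
    have ih' : ((2 * k + 1).factorial : ℝ) =
        mStar l k ^ 2 * deformedWallis l k * Pp l (2 * k + 1) := by
      rw [← ih]; field_simp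
    push_cast
    rw [ih']
    field_simp
    ring

lemma deformedWallis_le_W (l k : ℕ) : deformedWallis l k ≤ Wallis.W k := by
  refine prod_le_prod (fun _ _ => by positivity) fun i _ => ?_
  refine mul_le_mul_of_nonneg_right ?_ (by positivity)
  rw [div_le_div_iff₀ (by positivity) (by positivity)]
  nlinarith [(Nat.cast_nonneg l : (0:ℝ) ≤ l)]

lemma deformedWallis_three_le (k : ℕ) : deformedWallis 3 k ≤ 2 * (2 * k + 1) / (3 * k + 2) := by
  induction k with
  | zero => simp [deformedWallis]
  | succ k ih =>
    rw [deformedWallis, prod_range_succ, ← deformedWallis]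
    refine (mul_le_mul_of_nonneg_right ih (by positivity)).trans ?_
    push_cast
    rw [div_mul_div_comm, div_mul_div_comm, div_le_div_iff₀ (by positivity) (by positivity)]
    nlinarith [(Nat.cast_nonneg k : (0:ℝ) ≤ k)]

noncomputable def mStarQuot (l k : ℕ) : ℝ :=
  ∏ j ∈ range (k + 1), (2 * (j : ℝ) + 1) / (j + 1) * (((k + j) * l + 1) / (2 * j * l + 1))

lemma mStar_eq_mul_mStarQuot (l k : ℕ) :
    mStar l k = (k + 1).factorial / Pp l (2 * k + 1) * Pp l k * mStarQuot l k := by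
  have hsplit :
      Pp l (2 * k + 1) = Pp l k * ∏ j ∈ range (k + 1), (((k + j : ℕ) : ℝ) * l + 1) := by
    rw [Pp, Pp, show 2 * k + 1 = k + (k + 1) by ring, prod_range_add]
  have hfact : ((k + 1).factorial : ℝ) = ∏ j ∈ range (k + 1), ((j : ℝ) + 1) := by
    rw [← prod_range_add_one_eq_factorial]; push_cast; rfl
  rw [mStar, mStarQuot, hsplit, hfact, mul_comm (Pp l k), ← div_div,
    div_mul_cancel₀ _ (Pp_pos l k).ne', ← prod_div_distrib, ← prod_mul_distrib]
  refine prod_congr rfl fun j _ => ?_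
  push_cast
  field_simp

lemma pow_mul_le_mStarQuot (l k : ℕ) : (3 / 2) ^ k * (k * l + 1) ≤ mStarQuot l k := by
  rw [mStarQuot, prod_range_succ']
  refine mul_le_mul ?_ (by simp) (by positivity) (prod_nonneg fun _ _ => by positivity)
  rw [pow_eq_prod_const]
  refine prod_le_prod (fun _ _ => by positivity) fun j hj => ?_
  have hjk : (j : ℝ) + 1 ≤ k := by exact_mod_cast mem_range.1 hj
  rw [← mul_one (3 / 2 : ℝ)]
  push_cast
  refine mul_le_mul ?_ ?_ zero_le_one (by positivity)
  · rw [le_div_iff₀ (by positivity)]; linarith [(Nat.cast_nonneg j : (0:ℝ) ≤ j)]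
  · rw [one_le_div (by positivity)]; nlinarith [(Nat.cast_nonneg l : (0:ℝ) ≤ l)]

lemma three_halves_mul_le_mStar (l : ℕ) {k : ℕ} (hk : 1 ≤ k) :
    3 / 2 * (k * l + 1) * ((k + 1).factorial / Pp l (2 * k + 1) * Pp l k) ≤ mStar l k := by
  rw [mStar_eq_mul_mStarQuot, mul_comm _ (mStarQuot l k)]
  have := Pp_pos l (2 * k + 1)
  have := Pp_pos l k
  refine mul_le_mul_of_nonneg_right ((mul_le_mul_of_nonneg_right ?_ (by positivity)).trans
    (pow_mul_le_mStarQuot l k)) (by positivity)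
  exact le_self_pow₀ (by norm_num) (by omega)

lemma mul_sub_mul_sub_mul_pos {l m R G A ρ σ w g₁ g₂ g₃ : ℝ} (hl : 0 ≤ l) (hm : 0 < m)
    (hg₁ : 0 < g₁) (hg₃ : 0 ≤ g₃) (hR : 0 ≤ R) (hRA : R ≤ A) (hρ : 0 ≤ ρ)
    (hg₂ρ : g₂ ≤ ρ * g₁) (hg₃σ : g₃ ≤ σ * g₁) (hw : 0 < w) (hG : w * G ≤ m)
    (h : A * ρ * w + l * σ < l * w) :
    0 < l * m * g₁ - m * R * g₂ - l * G * g₃ := by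
  have hRg₂ : R * g₂ ≤ A * ρ * g₁ := calc
    R * g₂ ≤ R * (ρ * g₁) := mul_le_mul_of_nonneg_left hg₂ρ hR
    _ ≤ A * (ρ * g₁) := mul_le_mul_of_nonneg_right hRA (by positivity)
    _ = A * ρ * g₁ := by ring
  have hGg₃ : w * G * g₃ ≤ m * (σ * g₁) := mul_le_mul hG hg₃σ hg₃ hm.le
  refine pos_of_mul_pos_right (a := w) ?_ hw.le
  nlinarith [mul_le_mul_of_nonneg_left hRg₂ (mul_pos hm hw).le,
    mul_le_mul_of_nonneg_left hGg₃ hl, mul_pos (mul_pos hm hg₁) (sub_pos.2 h)]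

lemma reduced_b1_sub_b2_sub_b4_pos {l k : ℕ} (hl : 3 ≤ l) (hk : 1 ≤ k) :
    0 < l * mStar l k * gammaRatio (3 * k + 2 + 3 / (2 * l)) -
      mStar l k * deformedWallis l k * gammaRatio (k + 1 + 3 / (2 * l)) -
      l * ((k + 1).factorial / Pp l (2 * k + 1) * Pp l k) *
        gammaRatio (2 * k + 1 + 3 / (2 * l)) := by
  have hG₀ : 0 ≤ ((k + 1).factorial / Pp l (2 * k + 1) * Pp l k : ℝ) := by
    have := Pp_pos l (2 * k + 1); have := Pp_pos l k; positivity
  have hG := three_halves_mul_le_mStar l hk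
  have hkR : (1 : ℝ) ≤ k := by exact_mod_cast hk
  have he : 0 < 3 / (2 * (l : ℝ)) := by positivity
  have hg₁ := gammaRatio_pos (by positivity : 0 < 3 * (k : ℝ) + 2 + 3 / (2 * l))
  have hg₃ := gammaRatio_le_mul (x := 3 * k + 2 + 3 / (2 * l)) (y := 2 * k + 1 + 3 / (2 * l))
    (by positivity) (by linarith) (sqrt_nonneg 2) (by rw [sq_sqrt zero_le_two]; linarith)
  have hg₃₀ := (gammaRatio_pos (by positivity : 0 < 2 * (k : ℝ) + 1 + 3 / (2 * l))).le
  have hsqrt2 : √2 < 3 / 2 := by rw [sqrt_lt' (by norm_num)]; norm_num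
  rcases hl.eq_or_lt with rfl | hl4
  · have hg₂ := gammaRatio_le_mul (x := 3 * k + 2 + 3 / (2 * (3 : ℕ)))
      (y := k + 1 + 3 / (2 * (3 : ℕ))) (by positivity) (by linarith)
      (sqrt_nonneg 3) (by rw [sq_sqrt zero_le_three]; norm_num; linarith)
    have hsqrt3 : √3 < 7 / 4 := by rw [sqrt_lt' (by norm_num)]; norm_num
    have hR := deformedWallis_three_le k
    rcases hk.eq_or_lt with rfl | hk2
    · refine mul_sub_mul_sub_mul_pos (A := 6 / 5) (w := 6) (by positivity) (mStar_pos _ _) hg₁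
        hg₃₀ (deformedWallis_nonneg _ _) (by norm_num at hR ⊢; linarith) (sqrt_nonneg 3) hg₂ hg₃
        (by norm_num) (by norm_num at hG ⊢; linarith) (by norm_num; nlinarith)
    · have hk2R : (2 : ℝ) ≤ k := by exact_mod_cast hk2
      refine mul_sub_mul_sub_mul_pos (A := 4 / 3) (w := 21 / 2) (by positivity) (mStar_pos _ _)
        hg₁ hg₃₀ (deformedWallis_nonneg _ _) ?_ (sqrt_nonneg 3) hg₂ hg₃ (by norm_num) ?_
        (by norm_num; nlinarith)
      · exact hR.trans (by rw [div_le_div_iff₀ (by positivity) (by norm_num)]; linarith)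
      · exact (mul_le_mul_of_nonneg_right (by push_cast; linarith) hG₀).trans hG
  · have hl4R : (4 : ℝ) ≤ l := by exact_mod_cast hl4
    have hg₂ := gammaRatio_le_mul (x := 3 * k + 2 + 3 / (2 * l)) (y := k + 1 + 3 / (2 * l))
      (by positivity) (by linarith) (sqrt_nonneg (10 / 3))
      (by rw [sq_sqrt (by norm_num)]; linarith)
    have hsqrt : √(10 / 3) < 11 / 6 := by rw [sqrt_lt' (by norm_num)]; norm_num
    refine mul_sub_mul_sub_mul_pos (A := π / 2) (w := 3 / 2 * l) (by positivity) (mStar_pos _ _)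
      hg₁ hg₃₀ (deformedWallis_nonneg _ _) ((deformedWallis_le_W l k).trans (Wallis.W_le k))
      (sqrt_nonneg _) hg₂ hg₃ (by positivity)
      ((mul_le_mul_of_nonneg_right (by nlinarith) hG₀).trans hG) ?_
    have hπ : π * √(10 / 3) ≤ 3.15 * (11 / 6) :=
      mul_le_mul pi_lt_d2.le hsqrt.le (sqrt_nonneg _) (by norm_num)
    have hbudget : π / 2 * √(10 / 3) * (3 / 2) + √2 < 3 / 2 * l := by nlinarith
    nlinarith [mul_lt_mul_of_pos_left hbudget (by positivity : (0 : ℝ) < l)]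

/-- Lemma 3.3: when l ≥ 3, b₁⁰ − b₂⁰ − b₄⁰ > 0. -/
theorem b1_sub_b2_sub_b4_pos (l k : ℕ) (hl : 3 ≤ l) (hk : 1 ≤ k) :
    0 < (l : ℝ) * mStar l k ^ 3 / Dd l k * Ii l 0 (2 * (3 * k + 2) * l + 2) -
        mStar l k / Dd l k * ((Nat.factorial (2 * k + 1) : ℝ) / Pp l (2 * k + 1)) *
          Ii l 0 (2 * (k + 1) * l + 2) -
        (l : ℝ) * mStar l k ^ 2 / Dd l k * ((Nat.factorial (k + 1) : ℝ) / Pp l (2 * k + 1)) *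
          Pp l k * Ii l 0 (2 * (2 * k + 1) * l + 2) := by
  have hl₀ : l ≠ 0 := by omega
  rw [Ii_zero_two_mul_mul_add_two hl₀, Ii_zero_two_mul_mul_add_two hl₀,
    Ii_zero_two_mul_mul_add_two hl₀, factorial_div_Pp_eq]
  have hκ : 0 < 2 / (l : ℝ) ^ (1 / 2 : ℝ) * Gamma (1 / 2) := by
    have := Gamma_pos_of_pos one_half_pos; positivity
  have hD : 0 < Dd l k := by unfold Dd; positivity
  have hcoeff := div_pos (mul_pos hκ (pow_pos (mStar_pos l k) 2)) hD
  refine lt_of_lt_of_eq (mul_pos hcoeff (reduced_b1_sub_b2_sub_b4_pos hl hk)) ?_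
  push_cast
  ring
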